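/- For every complete graph G = (V, E) on n vertices with distinct positive edge weights and every k ∈ {1, …, n−1}, the ordering of the edges of M_k(G) by increasing edge weight is a k-construction order for the graph (V, M_k(G)). -/

import Mathlib

/-! Let `s(u, v)` be the `i`-th edge of the list; it lies on the minimum spanning tree of
`G - X` for some `X` with `|X| = k - 1`. Of `k` internally disjoint `u`–`v` paths through
earlier, hence lighter, edges, one avoids `X`. Together with `s(u, v)` it closes a cycle of
`G - X` on which `s(u, v)` is the heaviest edge, contradicting the cycle property of minimum
spanning trees. -/

/-- `IsSpanningTreeOn S T` : `T` is the edge set of a spanning tree of the complete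
graph on the vertex set `S`: all edges of `T` are non-loop edges with both endpoints
in `S`, all vertices of `S` are pairwise connected using edges of `T`, and
`|T| = |S| - 1`. -/
def IsSpanningTreeOn {V : Type*} [Fintype V] [DecidableEq V]
    (S : Finset V) (T : Finset (Sym2 V)) : Prop :=
  (∀ e ∈ T, ¬ e.IsDiag ∧ ∀ v ∈ e, v ∈ S) ∧
  (∀ u ∈ S, ∀ v ∈ S, (SimpleGraph.fromEdgeSet (↑T : Set (Sym2 V))).Reachable u v) ∧
  T.card + 1 = S.card

/-- The edge set of the (unique, since weights are injective) minimum spanning tree of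
the complete graph on the vertex set `S` with edge weights `w`: the set of edges
belonging to some minimum-weight spanning tree on `S`. -/
def mstEdges {V : Type*} [Fintype V] [DecidableEq V] (w : Sym2 V → ℝ) (S : Finset V) :
    Set (Sym2 V) :=
  {e | ∃ T : Finset (Sym2 V), IsSpanningTreeOn S T ∧
        (∀ T' : Finset (Sym2 V), IsSpanningTreeOn S T' → T.sum w ≤ T'.sum w) ∧ e ∈ T}

/-- `Mk w k` = `M_k(G)`: the union of the edge sets of the minimum spanning trees of all
induced subgraphs of the complete graph on `V` obtained by deleting `k - 1` vertices. -/
def Mk {V : Type*} [Fintype V] [DecidableEq V] (w : Sym2 V → ℝ) (k : ℕ) : Set (Sym2 V) :=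
  {e | ∃ X : Finset V, X.card = k - 1 ∧ e ∈ mstEdges w (Finset.univ \ X)}

/-- Two walks from `u` to `v` are internally disjoint if the only vertices they share
are `u` and `v`. -/
def InternallyDisjoint {V : Type*} {G : SimpleGraph V} {u v : V}
    (p q : G.Walk u v) : Prop :=
  ∀ x, x ∈ p.support → x ∈ q.support → x = u ∨ x = v

/-- `HasDisjointPaths G u v k` : `G` contains (at least) `k` pairwise internally
vertex-disjoint paths between `u` and `v`. -/
def HasDisjointPaths {V : Type*} (G : SimpleGraph V) (u v : V) (k : ℕ) : Prop :=
  ∃ P : Fin k → G.Walk u v, (∀ i, (P i).IsPath) ∧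
    Pairwise fun i j => InternallyDisjoint (P i) (P j)

/-- `IsConstructionOrder k G l` : the list `l` enumerates the edges of `G` without
repetition, and each edge joins two vertices between which the graph formed by the
previous edges has at most `k - 1` internally vertex-disjoint paths. -/
def IsConstructionOrder {V : Type*} [DecidableEq V] (k : ℕ) (G : SimpleGraph V)
    (l : List (Sym2 V)) : Prop :=
  l.Nodup ∧ (↑l.toFinset : Set (Sym2 V)) = G.edgeSet ∧
  ∀ (i : ℕ) (h : i < l.length) (u v : V), l.get ⟨i, h⟩ = s(u, v) →
    ¬ HasDisjointPaths (SimpleGraph.fromEdgeSet (↑(l.take i).toFinset)) u v k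

/-- A graph is `k`-constructible if it admits a `k`-construction order of its edges. -/
def IsKConstructible {V : Type*} [DecidableEq V] (k : ℕ) (G : SimpleGraph V) : Prop :=
  ∃ l : List (Sym2 V), IsConstructionOrder k G l

/-- A graph is `k`-(vertex-)connected: it has more than `k` vertices and deleting any
fewer than `k` vertices leaves a connected graph. -/
def IsKConnectedGraph {V : Type*} [Fintype V] [DecidableEq V]
    (k : ℕ) (G : SimpleGraph V) : Prop :=
  k < Fintype.card V ∧
  ∀ S : Finset V, S.card < k → (G.induce ((↑S : Set V)ᶜ)).Connected

/-- A graph is `k`-minimal if it is `k`-connected and deleting any single edge destroys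
`k`-connectivity. -/
def IsKMinimal {V : Type*} [Fintype V] [DecidableEq V]
    (k : ℕ) (G : SimpleGraph V) : Prop :=
  IsKConnectedGraph k G ∧ ∀ e ∈ G.edgeSet, ¬ IsKConnectedGraph k (G.deleteEdges {e})

open SimpleGraph

lemma List.Pairwise.rel_getElem_of_mem_take {α : Type*} {R : α → α → Prop} {l : List α}
    (h : l.Pairwise R) {i : ℕ} (hi : i < l.length) {a : α} (ha : a ∈ l.take i) :
    R a l[i] := by
  rw [← List.take_append_drop i l, List.pairwise_append] at h
  exact h.2.2 a ha _ (List.mem_drop_iff_getElem.2 ⟨0, by omega, rfl⟩)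

namespace SimpleGraph

variable {V : Type*}

lemma Walk.support_subset_of_forall_adj {G : SimpleGraph V} {s : Set V}
    (hs : ∀ x y, G.Adj x y → y ∈ s) {u v : V} (p : G.Walk u v) (hu : u ∈ s) :
    ∀ x ∈ p.support, x ∈ s := by
  induction p with
  | nil => simpa
  | cons h p ih => simpa [hu] using ih (hs _ _ h)

lemma Reachable.deleteEdges_or {G : SimpleGraph V} {x a : V} (b : V) (h : G.Reachable x a) :
    (G.deleteEdges {s(a, b)}).Reachable x a ∨ (G.deleteEdges {s(a, b)}).Reachable x b := by
  suffices ∀ {x y : V}, G.Walk x y → (G.deleteEdges {s(a, b)}).Reachable x y ∨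
      (G.deleteEdges {s(a, b)}).Reachable x a ∨ (G.deleteEdges {s(a, b)}).Reachable x b by
    obtain ⟨p⟩ := h
    have := this p
    tauto
  intro x y p
  induction p with
  | nil => exact Or.inl .rfl
  | @cons x z _ hxz p ih =>
    by_cases hab : s(x, z) = s(a, b)
    · rcases Sym2.eq_iff.1 hab with ⟨rfl, -⟩ | ⟨rfl, -⟩ <;> tauto
    · have hxz' : (G.deleteEdges {s(a, b)}).Adj x z := by simp [hxz, hab]
      exact ih.imp hxz'.reachable.trans (Or.imp hxz'.reachable.trans hxz'.reachable.trans)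

lemma fromEdgeSet_erase [DecidableEq V] (T : Finset (Sym2 V)) (e : Sym2 V) :
    fromEdgeSet (T.erase e) = (fromEdgeSet T).deleteEdges {e} := by
  rw [Finset.coe_erase, fromEdgeSet_sdiff, deleteEdges]

lemma card_le_card_add_one_of_reachable [DecidableEq V] {S : Finset V} {T : Finset (Sym2 V)}
    (hT : ∀ e ∈ T, ∀ v ∈ e, v ∈ S)
    (hS : ∀ u ∈ S, ∀ v ∈ S, (fromEdgeSet (T : Set (Sym2 V))).Reachable u v) :
    S.card ≤ T.card + 1 := by
  obtain rfl | ⟨u₀, hu₀⟩ := S.eq_empty_or_nonempty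
  · simp
  set G := fromEdgeSet (T : Set (Sym2 V))
  have hadj : ∀ x y, G.Adj x y → y ∈ (S : Set V) := fun x y h =>
    hT _ ((fromEdgeSet_adj _).1 h).1 y (Sym2.mem_mk_right x y)
  have hconn : (G.induce (S : Set V)).Connected := by
    have : Nonempty (S : Set V) := ⟨⟨u₀, hu₀⟩⟩
    refine ⟨fun ⟨x, hx⟩ ⟨y, hy⟩ => ?_⟩
    obtain ⟨p⟩ := hS x hx y hy
    exact ⟨p.induce _ (p.support_subset_of_forall_adj hadj hx)⟩
  calc S.card = Nat.card (S : Set V) := by simp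
    _ ≤ Nat.card (G.induce (S : Set V)).edgeSet + 1 := hconn.card_vert_le_card_edgeSet_add_one
    _ ≤ Nat.card G.edgeSet + 1 := by
      gcongr
      exact Nat.card_le_card_of_injective _ (Embedding.induce _).mapEdgeSet.injective
    _ ≤ T.card + 1 := by
      gcongr
      rw [edgeSet_fromEdgeSet, Nat.card_coe_set_eq, ← Set.ncard_coe_finset T]
      exact Set.ncard_le_ncard Set.sdiff_subset

end SimpleGraph

namespace IsSpanningTreeOn

variable {V : Type*} [Fintype V] [DecidableEq V] {S : Finset V} {T : Finset (Sym2 V)} {u v : V}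

lemma mem_of_mem_edge (hT : IsSpanningTreeOn S T) {e : Sym2 V} (he : e ∈ T) {x : V}
    (hx : x ∈ e) : x ∈ S :=
  (hT.1 e he).2 x hx

lemma reachable_erase_or (hT : IsSpanningTreeOn S T) (hu : u ∈ S) {x : V} (hx : x ∈ S) :
    (fromEdgeSet (T.erase s(u, v))).Reachable u x ∨
      (fromEdgeSet (T.erase s(u, v))).Reachable v x := by
  rw [fromEdgeSet_erase]
  exact ((hT.2.1 x hx u hu).deleteEdges_or v).imp Reachable.symm Reachable.symm

lemma not_reachable_erase (hT : IsSpanningTreeOn S T) (he : s(u, v) ∈ T) :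
    ¬ (fromEdgeSet (T.erase s(u, v))).Reachable u v := by
  intro huv
  have hu : u ∈ S := hT.mem_of_mem_edge he (Sym2.mem_mk_left u v)
  have hall : ∀ x ∈ S, (fromEdgeSet (T.erase s(u, v))).Reachable u x := fun x hx =>
    (hT.reachable_erase_or hu hx).elim id huv.trans
  have hcard := card_le_card_add_one_of_reachable
    (fun _ he' _ => hT.mem_of_mem_edge (Finset.mem_of_mem_erase he'))
    (fun x hx y hy => (hall x hx).symm.trans (hall y hy))
  have := hT.2.2
  have := Finset.card_pos.2 ⟨_, he⟩
  rw [Finset.card_erase_of_mem he] at hcard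
  omega

lemma exchange (hT : IsSpanningTreeOn S T) (he : s(u, v) ∈ T) {a b : V} (ha : a ∈ S)
    (hb : b ∈ S) (hua : (fromEdgeSet (T.erase s(u, v))).Reachable u a)
    (hub : ¬ (fromEdgeSet (T.erase s(u, v))).Reachable u b) :
    IsSpanningTreeOn S (insert s(a, b) (T.erase s(u, v))) := by
  set A := T.erase s(u, v)
  have hu : u ∈ S := hT.mem_of_mem_edge he (Sym2.mem_mk_left u v)
  have hab : a ≠ b := by rintro rfl; exact hub hua
  have habA : s(a, b) ∉ A := fun h =>
    hub (hua.trans ((fromEdgeSet_adj _).2 ⟨h, hab⟩).reachable)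
  have hmono : fromEdgeSet (A : Set (Sym2 V)) ≤ fromEdgeSet (↑(insert s(a, b) A)) :=
    fromEdgeSet_mono (by simp [Set.subset_insert])
  have hvb : (fromEdgeSet (A : Set (Sym2 V))).Reachable v b :=
    (hT.reachable_erase_or hu hb).resolve_left hub
  have huv : (fromEdgeSet (↑(insert s(a, b) A) : Set (Sym2 V))).Reachable u v :=
    ((hua.mono hmono).trans ((fromEdgeSet_adj _).2 ⟨by simp, hab⟩).reachable).trans
      (hvb.mono hmono).symm
  have hall : ∀ x ∈ S, (fromEdgeSet (↑(insert s(a, b) A) : Set (Sym2 V))).Reachable u x :=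
    fun x hx => (hT.reachable_erase_or hu hx).elim (·.mono hmono) (huv.trans <| ·.mono hmono)
  refine ⟨fun f hf => ?_, fun x hx y hy => (hall x hx).symm.trans (hall y hy), ?_⟩
  · rcases Finset.mem_insert.1 hf with rfl | hf
    · refine ⟨by simpa using hab, fun x hx => ?_⟩
      rcases Sym2.mem_iff.1 hx with rfl | rfl <;> assumption
    · exact hT.1 f (Finset.mem_of_mem_erase hf)
  · rw [Finset.card_insert_of_notMem habA, Finset.card_erase_of_mem he, ← hT.2.2]
    have := Finset.card_pos.2 ⟨_, he⟩
    omega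

/-- The cycle property of minimum spanning trees. -/
theorem exists_mem_darts_le_weight (w : Sym2 V → ℝ) (hT : IsSpanningTreeOn S T)
    (hmin : ∀ T' : Finset (Sym2 V), IsSpanningTreeOn S T' → T.sum w ≤ T'.sum w)
    (he : s(u, v) ∈ T) {H : SimpleGraph V} (p : H.Walk u v) (hp : ∀ x ∈ p.support, x ∈ S) :
    ∃ d ∈ p.darts, w s(u, v) ≤ w d.edge := by
  obtain ⟨d, hd, hda, hdb⟩ := p.exists_boundary_dart
    {x | (fromEdgeSet (↑(T.erase s(u, v)) : Set (Sym2 V))).Reachable u x} .rfl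
    (hT.not_reachable_erase he)
  refine ⟨d, hd, ?_⟩
  have hT' := hT.exchange he (hp _ (p.dart_fst_mem_support_of_mem_darts hd))
    (hp _ (p.dart_snd_mem_support_of_mem_darts hd)) hda hdb
  have hnotMem : s(d.fst, d.snd) ∉ T.erase s(u, v) := fun h =>
    hdb (hda.trans ((fromEdgeSet_adj _).2 ⟨h, d.adj.ne⟩).reachable)
  have := hmin _ hT'
  rw [Finset.sum_insert hnotMem, ← Finset.sum_erase_add _ _ he] at this
  change w s(u, v) ≤ w s(d.fst, d.snd)
  linarith

end IsSpanningTreeOn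

lemma HasDisjointPaths.exists_walk_support_disjoint {V : Type*} {G : SimpleGraph V} {u v : V}
    {k : ℕ} (h : HasDisjointPaths G u v k) {X : Finset V} (hX : X.card < k) (hu : u ∉ X)
    (hv : v ∉ X) : ∃ p : G.Walk u v, ∀ x ∈ p.support, x ∉ X := by
  obtain ⟨P, -, hdisj⟩ := h
  by_contra! hmeet
  choose f hfP hfX using fun i => hmeet (P i)
  obtain ⟨i, j, hij, hfij⟩ := Fintype.exists_ne_map_eq_of_card_lt
    (fun i => (⟨f i, hfX i⟩ : X)) (by simpa using hX)
  have hfij : f i = f j := congrArg Subtype.val hfij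
  rcases hdisj hij (f i) (hfP i) (hfij ▸ hfP j) with h | h
  · exact hu (h ▸ hfX i)
  · exact hv (h ▸ hfX i)

theorem stmt_6_general {V : Type*} [Fintype V] [DecidableEq V] (w : Sym2 V → ℝ)
    (k : ℕ) (hk1 : 1 ≤ k)
    (l : List (Sym2 V)) (hsort : l.Pairwise fun e f => w e < w f)
    (hset : (↑l.toFinset : Set (Sym2 V)) = Mk w k) :
    IsConstructionOrder k (SimpleGraph.fromEdgeSet (Mk w k)) l := by
  have hMk : Disjoint (Mk w k) Sym2.diagSet := Set.disjoint_left.2 fun e ⟨_, _, T, hT, _, he⟩ =>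
    Sym2.mem_diagSet.not.2 (hT.1 e he).1
  refine ⟨hsort.imp fun h => ne_of_apply_ne w h.ne,
    by rw [edgeSet_fromEdgeSet, hset, hMk.sdiff_eq_left], ?_⟩
  intro i hi u v hget hpaths
  obtain ⟨X, hX, T, hT, hmin, he⟩ : s(u, v) ∈ Mk w k :=
    hset ▸ hget ▸ List.mem_toFinset.2 (l.get_mem _)
  have hS : ∀ x ∈ s(u, v), x ∉ X := fun x hx =>
    (Finset.mem_sdiff.1 (hT.mem_of_mem_edge he hx)).2
  obtain ⟨p, hp⟩ := hpaths.exists_walk_support_disjoint (by omega)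
    (hS u (Sym2.mem_mk_left u v)) (hS v (Sym2.mem_mk_right u v))
  obtain ⟨d, hd, hle⟩ := hT.exists_mem_darts_le_weight w hmin he p
    fun x hx => Finset.mem_sdiff.2 ⟨Finset.mem_univ x, hp x hx⟩
  have hprev : d.edge ∈ l.take i := by
    have := p.edges_subset_edgeSet (List.mem_map_of_mem hd)
    rw [edgeSet_fromEdgeSet] at this
    exact List.mem_toFinset.1 this.1
  have hlt := hsort.rel_getElem_of_mem_take hi hprev
  rw [List.get_eq_getElem] at hget
  rw [hget] at hlt
  linarith

/-- the ordering of the edges of `M_k(G)` by increasing edge weight is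
a `k`-construction order for the graph `(V, M_k(G))`. -/
theorem stmt_6 {V : Type*} [Fintype V] [DecidableEq V] (w : Sym2 V → ℝ)
    (hpos : ∀ e : Sym2 V, ¬ e.IsDiag → 0 < w e)
    (hinj : ∀ e f : Sym2 V, ¬ e.IsDiag → ¬ f.IsDiag → w e = w f → e = f)
    (k : ℕ) (hk1 : 1 ≤ k) (hk2 : k ≤ Fintype.card V - 1)
    (l : List (Sym2 V)) (hsort : l.Pairwise fun e f => w e < w f)
    (hset : (↑l.toFinset : Set (Sym2 V)) = Mk w k) :
    IsConstructionOrder k (SimpleGraph.fromEdgeSet (Mk w k)) l :=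
  stmt_6_general w k hk1 l hsort hset
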